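/- For every k ≥ 0 and l ≥ 1, with d' = 4k + 4 + 3l, there exists an integral simplex P ⊂ R^{d'} of dimension d' whose δ-vector is (1, 0^{k+l}, 1, 0^k, 1, 0^{k+l}, 1, 0^k, 1, 0^{k+l}) ∈ Z^{d'+1}, where 0^j denotes j consecutive zeros. -/

import Mathlib

open scoped BigOperators Pointwise

noncomputable section

/-- The lattice points of a subset of `ℝ^N`. -/
def latticePoints {N : ℕ} (P : Set (Fin N → ℝ)) : Set (Fin N → ℤ) :=
  {x | (fun i => (x i : ℝ)) ∈ P}

/-- The Ehrhart counting function `i(P,n) = |nP ∩ ℤ^N|`. -/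
def ehrhart {N : ℕ} (P : Set (Fin N → ℝ)) (n : ℕ) : ℤ :=
  ((latticePoints ((n : ℝ) • P)).ncard : ℤ)

/-- The `i`-th entry of the Ehrhart δ-vector of a `d`-dimensional polytope,
i.e. the coefficient of `λ^i` in `(1-λ)^{d+1} · Σ_{n ≥ 0} i(P,n) λ^n`. -/
def deltaVec {N : ℕ} (P : Set (Fin N → ℝ)) (d i : ℕ) : ℤ :=
  ∑ j ∈ Finset.range (i + 1),
    (-1 : ℤ) ^ (i - j) * (Nat.choose (d + 1) (i - j)) * ehrhart P j

/-- `P ⊆ ℝ^N` is an integral convex polytope of dimension `d`. -/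
def IsIntegralPolytope {N : ℕ} (P : Set (Fin N → ℝ)) (d : ℕ) : Prop :=
  (∃ V : Finset (Fin N → ℤ),
      P = convexHull ℝ ((fun x => fun i => ((x i : ℤ) : ℝ)) '' (V : Set (Fin N → ℤ)))) ∧
    Module.finrank ℝ (affineSpan ℝ P).direction = d


/-!
The simplex `conv(0, e_i (i ≠ L), w)` with `w_L = q > 0` has normalized volume `q`. Every lattice
point of its cone is uniquely a "box point" `b_t` (`t = x_L mod q`, `0 ≤ t < q`) plus a nonnegative
integer combination of the generators `e_i` (`i ≠ L`) and `w`. Hence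
`|nP ∩ ℤ^N| = ∑_t C(n - h_t + N, N)`, where `h_t` is the height of `b_t`, and multiplying the
Ehrhart series by `(1 - λ)^(N+1)` leaves `δ(λ) = ∑_t λ^(h_t)`. For `q = 5` and `w` made of one `5`,
`l - 1` twos and `5k + 2l + 4` fours, the five heights are `0, k+l+1, 2k+l+2, 3k+2l+3, 4k+2l+4`.
-/

section EhrhartSeries

open Finset PowerSeries

theorem PowerSeries.coeff_one_sub_X_pow {R : Type*} [CommRing R] (m j : ℕ) :
    coeff j ((1 - X : R⟦X⟧) ^ m) = (-1) ^ j * m.choose j := by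
  have h : (1 - X : R⟦X⟧) = rescale (-1) ((1 + Polynomial.X : Polynomial R) : R⟦X⟧) := by
    simp [rescale_X, sub_eq_add_neg]
  rw [h, ← map_pow, coeff_rescale, ← Polynomial.coe_pow, Polynomial.coeff_coe,
    Polynomial.coeff_one_add_X_pow]

theorem deltaVec_eq_coeff {N : ℕ} (P : Set (Fin N → ℝ)) (d i : ℕ) :
    deltaVec P d i = coeff i ((1 - X) ^ (d + 1) * PowerSeries.mk (ehrhart P)) := by
  rw [coeff_mul, Nat.sum_antidiagonal_eq_sum_range_succ fun a b =>
    coeff a ((1 - X : ℤ⟦X⟧) ^ (d + 1)) * coeff b (PowerSeries.mk (ehrhart P)), deltaVec,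
    ← sum_range_reflect]
  refine sum_congr rfl fun j hj => ?_
  rw [mem_range] at hj
  simp only [coeff_one_sub_X_pow, coeff_mk, show i + 1 - 1 - j = i - j by omega,
    show i - (i - j) = j by omega]

theorem deltaVec_eq_card_of_ehrhart_eq {N : ℕ} {P : Set (Fin N → ℝ)} {d : ℕ} {ι : Type*}
    [Fintype ι] (h : ι → ℕ)
    (hP : ∀ n, ehrhart P n = ∑ t, if h t ≤ n then ((n - h t + d).choose d : ℤ) else 0)
    (i : ℕ) : deltaVec P d i = #{t | h t = i} := by
  have hseries : PowerSeries.mk (ehrhart P) =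
      (∑ t, X ^ h t) * PowerSeries.mk fun n => ((d + n).choose d : ℤ) := by
    ext n
    simp only [hP, coeff_mk, sum_mul, map_sum, coeff_X_pow_mul']
    refine sum_congr rfl fun t _ => ?_
    split_ifs <;> simp [add_comm]
  rw [deltaVec_eq_coeff, hseries, mul_left_comm, mul_comm ((1 - X) ^ _),
    mk_add_choose_mul_one_sub_pow_eq_one, mul_one, map_sum, card_filter]
  simp [coeff_X_pow, eq_comm]

end EhrhartSeries

section StarsAndBars

def sumLeEquivSumEq (N M : ℕ) :
    {g : Fin N → ℕ // ∑ i, g i ≤ M} ≃ {g : Fin (N + 1) → ℕ // ∑ i, g i = M} where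
  toFun g := ⟨Fin.cons (M - ∑ i, g.1 i) g.1, by rw [Fin.sum_cons]; have := g.2; omega⟩
  invFun g := ⟨Fin.tail g.1, by
    have := g.2
    rw [Fin.sum_univ_succ] at this
    simp only [Fin.tail]
    omega⟩
  left_inv g := by simp
  right_inv g := by
    ext1
    have := g.2
    rw [Fin.sum_univ_succ] at this
    simp only [Fin.tail, ← this, Nat.add_sub_cancel]
    exact Fin.cons_self_tail g.1

theorem card_tuple_sum_le (N M : ℕ) :
    Nat.card {g : Fin N → ℕ // ∑ i, g i ≤ M} = (M + N).choose N := by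
  rw [Nat.card_congr ((sumLeEquivSumEq N M).trans (Sym.equivNatSumOfFintype _ M).symm),
    Nat.card_eq_fintype_card, Sym.card_sym_eq_choose, Fintype.card_fin,
    Nat.add_right_comm, Nat.add_sub_cancel, add_comm, Nat.choose_symm_add]

instance (N h n : ℕ) : Finite {g : Fin N → ℕ // ∑ i, g i + h ≤ n} :=
  Finite.of_injective
    (fun g i => (⟨g.1 i, by
      have := Finset.single_le_sum (fun j _ => Nat.zero_le (g.1 j)) (Finset.mem_univ i)
      have := g.2
      omega⟩ : Fin (n + 1)))
    fun g g' hgg' => Subtype.ext <| funext fun i => by simpa using congrFun hgg' i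

theorem card_tuple_sum_add_le (N h n : ℕ) :
    Nat.card {g : Fin N → ℕ // ∑ i, g i + h ≤ n} =
      if h ≤ n then (n - h + N).choose N else 0 := by
  split_ifs with hhn
  · rw [← card_tuple_sum_le]
    exact Nat.card_congr (Equiv.subtypeEquivRight fun g => by omega)
  · have : IsEmpty {g : Fin N → ℕ // ∑ i, g i + h ≤ n} := ⟨fun g => by have := g.2; omega⟩
    exact Nat.card_of_isEmpty

end StarsAndBars

section CornerSimplex

variable {N : ℕ} {R : Type*} [CommRing R] (w : Fin N → R) (L : Fin N)

def cornerGen (i : Fin N) : Fin N → R := if i = L then w else Pi.single i 1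

def cornerVertices : Fin (N + 1) → Fin N → R := Fin.cons 0 (cornerGen w L)

/-- `w L` times the coordinates of `x` in the basis `cornerGen w L`. Each coordinate functional is
an inner facet normal of the simplex `cornerVertices w L`, and their sum is the outer normal of the
facet opposite `0`. -/
def cornerCoords : (Fin N → R) →ₗ[R] Fin N → R where
  toFun x i := if i = L then x L else w L * x i - x L * w i
  map_add' x y := by ext i; simp only [Pi.add_apply]; split_ifs <;> ring
  map_smul' c x := by
    ext i; simp only [Pi.smul_apply, smul_eq_mul, RingHom.id_apply]; split_ifs <;> ring

theorem cornerCoords_apply (x : Fin N → R) (i : Fin N) :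
    cornerCoords w L x i = if i = L then x L else w L * x i - x L * w i := rfl

theorem cornerCoords_cornerGen (j : Fin N) :
    cornerCoords w L (cornerGen w L j) = Pi.single j (w L) := by
  ext i
  by_cases hj : j = L <;> by_cases hi : i = L <;>
    simp [cornerCoords_apply, cornerGen, Pi.single_apply, hi, hj]

theorem cornerCoords_sum_smul (c : Fin N → R) :
    cornerCoords w L (∑ j, c j • cornerGen w L j) = w L • c := by
  simp only [map_sum, map_smul, cornerCoords_cornerGen]
  ext i
  simp [Pi.single_apply, mul_comm]

theorem sum_smul_cornerGen_apply (c : Fin N → R) (i : Fin N) :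
    (∑ j, c j • cornerGen w L j) i = if i = L then c L * w L else c i + c L * w i := by
  rw [Finset.sum_apply, Fintype.sum_eq_add_sum_compl L]
  split_ifs with hi
  · subst hi
    rw [Finset.sum_eq_zero fun j hj => ?_]
    · simp [cornerGen]
    · simp_all [cornerGen, Ne.symm]
  · rw [Finset.sum_eq_single_of_mem i (by simpa using hi)]
    · simp [cornerGen, hi, add_comm]
    · intro j hj hji
      simp_all [cornerGen]

theorem sum_cornerCoords_smul (x : Fin N → R) :
    ∑ i, cornerCoords w L x i • cornerGen w L i = w L • x := by
  ext k
  rw [sum_smul_cornerGen_apply]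
  split_ifs with hk <;> simp [cornerCoords_apply, hk, mul_comm]

theorem sum_smul_cornerVertices (μ : Fin (N + 1) → R) :
    ∑ j, μ j • cornerVertices w L j = ∑ i, μ i.succ • cornerGen w L i := by
  simp [Fin.sum_univ_succ, cornerVertices]

theorem cornerVertices_map {S : Type*} [CommRing S] (f : R →+* S) (j : Fin (N + 1)) :
    (fun i => f (cornerVertices w L j i)) = cornerVertices (fun i => f (w i)) L j := by
  ext i
  induction j using Fin.cases with
  | zero => simp [cornerVertices]
  | succ j =>
    by_cases hj : j = L <;> simp [cornerVertices, cornerGen, hj, Pi.single_apply, apply_ite f]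

theorem cornerCoords_map {S : Type*} [CommRing S] (f : R →+* S) (x : Fin N → R) (i : Fin N) :
    f (cornerCoords w L x i) = cornerCoords (fun i => f (w i)) L (fun i => f (x i)) i := by
  simp only [cornerCoords_apply, apply_ite f, map_sub, map_mul]

theorem intCast_cornerVertices (w : Fin N → ℤ) (L : Fin N) :
    (fun j i => ((cornerVertices w L j i : ℤ) : ℝ)) = cornerVertices (fun i => (w i : ℝ)) L :=
  funext (cornerVertices_map w L (Int.castRingHom ℝ))

theorem affineIndependent_cornerVertices {K : Type*} [Field K] (w : Fin N → K) (L : Fin N)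
    (hwL : w L ≠ 0) : AffineIndependent K (cornerVertices w L) := by
  rw [affineIndependent_iff_of_fintype]
  intro μ hμ hcomb
  rw [Finset.weightedVSub_eq_linear_combination _ hμ, sum_smul_cornerVertices] at hcomb
  have hscaled := congrArg (cornerCoords w L) hcomb
  rw [cornerCoords_sum_smul, map_zero, smul_eq_zero] at hscaled
  have htail (i : Fin N) : μ i.succ = 0 := congrFun (hscaled.resolve_left hwL) i
  intro j
  induction j using Fin.cases with
  | zero => simpa [Fin.sum_univ_succ, htail] using hμ
  | succ i => exact htail i

section Real

variable (w : Fin N → ℝ) (L : Fin N)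

theorem convex_cornerCoords_le (c : ℝ) :
    Convex ℝ {x | (∀ i, 0 ≤ cornerCoords w L x i) ∧ ∑ i, cornerCoords w L x i ≤ c} := by
  rintro x ⟨hx₀, hx₁⟩ y ⟨hy₀, hy₁⟩ a b ha hb hab
  simp only [Set.mem_ofPred_eq, map_add, map_smul, Pi.add_apply, Pi.smul_apply, smul_eq_mul,
    Finset.sum_add_distrib, ← Finset.mul_sum]
  refine ⟨fun i => by have := hx₀ i; have := hy₀ i; positivity, ?_⟩
  calc _ ≤ a * c + b * c :=
        add_le_add (mul_le_mul_of_nonneg_left hx₁ ha) (mul_le_mul_of_nonneg_left hy₁ hb)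
    _ = c := by rw [← add_mul, hab, one_mul]

theorem convexHull_cornerVertices (hwL : 0 < w L) :
    convexHull ℝ (Set.range (cornerVertices w L)) =
      {x | (∀ i, 0 ≤ cornerCoords w L x i) ∧ ∑ i, cornerCoords w L x i ≤ w L} := by
  refine subset_antisymm (convexHull_min ?_ (convex_cornerCoords_le w L _)) ?_
  · rintro _ ⟨j, rfl⟩
    induction j using Fin.cases with
    | zero => simp [cornerVertices, hwL.le]
    | succ j =>
      simp only [cornerVertices, Fin.cons_succ, Set.mem_ofPred_eq, cornerCoords_cornerGen,
        Finset.sum_pi_single', Finset.mem_univ, if_true]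
      exact ⟨fun i => by simp [Pi.single_apply, hwL.le, apply_ite], le_rfl⟩
  · rintro x ⟨hx₀, hx₁⟩
    set μ : Fin (N + 1) → ℝ :=
      Fin.cons (1 - (∑ i, cornerCoords w L x i) / w L) fun i => cornerCoords w L x i / w L
    have hμx : ∑ j, μ j • cornerVertices w L j = x := by
      rw [sum_smul_cornerVertices]
      simp only [μ, Fin.cons_succ, div_eq_inv_mul, mul_smul, ← Finset.smul_sum,
        sum_cornerCoords_smul, inv_smul_smul₀ hwL.ne']
    rw [← hμx]
    refine (convex_convexHull ℝ _).sum_mem (fun j _ => ?_) ?_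
      fun j _ => subset_convexHull ℝ _ ⟨j, rfl⟩
    · induction j using Fin.cases with
      | zero => simpa [μ, sub_nonneg, div_le_one hwL] using hx₁
      | succ i => simpa [μ] using div_nonneg (hx₀ i) hwL.le
    · simp [μ, Fin.sum_univ_succ, ← Finset.sum_div]

theorem mem_smul_convexHull_cornerVertices (hwL : 0 < w L) {c : ℝ} (hc : 0 ≤ c)
    (x : Fin N → ℝ) :
    x ∈ c • convexHull ℝ (Set.range (cornerVertices w L)) ↔
      (∀ i, 0 ≤ cornerCoords w L x i) ∧ ∑ i, cornerCoords w L x i ≤ w L * c := by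
  rcases hc.eq_or_lt with rfl | hc
  · rw [Set.zero_smul_set (Set.range_nonempty _).convexHull, Set.mem_zero, mul_zero]
    constructor
    · rintro rfl
      simp
    · rintro ⟨hx₀, hx₁⟩
      have hcoords : cornerCoords w L x = 0 :=
        funext ((Finset.sum_eq_zero_iff_of_nonneg fun i _ => hx₀ i).1
          (le_antisymm hx₁ (Finset.sum_nonneg fun i _ => hx₀ i)) · (Finset.mem_univ _))
      simpa [hcoords, hwL.ne'] using (sum_cornerCoords_smul w L x).symm
  · rw [Set.mem_smul_set_iff_inv_smul_mem₀ hc.ne', convexHull_cornerVertices w L hwL]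
    simp only [Set.mem_ofPred_eq, map_smul, Pi.smul_apply, smul_eq_mul, ← Finset.mul_sum,
      inv_mul_le_iff₀ hc, mul_nonneg_iff_of_pos_left (inv_pos.2 hc), mul_comm c]

end Real

end CornerSimplex

theorem Int.ceil_intCast_div_le_iff {a b q : ℤ} (hq : 0 < q) :
    ⌈(a / q : ℚ)⌉ ≤ b ↔ a ≤ q * b := by
  rw [Int.ceil_le, div_le_iff₀ (by exact_mod_cast hq), mul_comm]
  exact_mod_cast Iff.rfl

theorem Nat.ceil_intCast_div_eq {s q : ℤ} {h : ℕ} (hq : 0 < q) (hlow : q * h < s + q)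
    (hup : s ≤ q * h) : ⌈(s / q : ℚ)⌉₊ = h := by
  have hq' : (0 : ℚ) < q := by exact_mod_cast hq
  refine le_antisymm (Nat.ceil_le.2 ?_) ?_
  · rw [div_le_iff₀ hq']
    exact_mod_cast (by linarith : s ≤ h * q)
  · rcases h with _ | h
    · exact Nat.zero_le _
    · rw [Nat.add_one_le_iff, Nat.lt_ceil, lt_div_iff₀ hq']
      push_cast at hlow
      exact_mod_cast (by linarith : (h : ℤ) * q < s)

section BoxPoints

variable {N : ℕ} (w : Fin N → ℤ) (L : Fin N)

/-- The lattice point of the half-open parallelepiped spanned by the generators `cornerGen w L`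
whose coordinate along the apex `w` is `t / w L`; its coordinates along the `e_i` are then
`⌈t w_i / w_L⌉ - t w_i / w_L`. -/
def boxPoint (t : ℕ) : Fin N → ℤ := fun i => if i = L then t else ⌈(t * w i / w L : ℚ)⌉

/-- The height of `boxPoint w L t`: its coordinates in the basis `cornerGen w L` sum to
`(∑ i, cornerCoords w L (boxPoint w L t) i) / w L`, and the vertex `0` tops this up to an
integer. -/
def boxHeight (t : ℕ) : ℕ := ⌈((∑ i, cornerCoords w L (boxPoint w L t) i : ℤ) / w L : ℚ)⌉₊

def boxTranslate (t : ℕ) (g : Fin N → ℕ) : Fin N → ℤ :=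
  boxPoint w L t + ∑ i, (g i : ℤ) • cornerGen w L i

theorem boxTranslate_apply (t : ℕ) (g : Fin N → ℕ) (i : Fin N) :
    boxTranslate w L t g i =
      if i = L then t + g L * w L else ⌈(t * w i / w L : ℚ)⌉ + (g i + g L * w i) := by
  rw [boxTranslate, Pi.add_apply, sum_smul_cornerGen_apply]
  split_ifs with hi <;> simp [boxPoint, hi]

theorem cornerCoords_boxTranslate (t : ℕ) (g : Fin N → ℕ) :
    cornerCoords w L (boxTranslate w L t g) =
      cornerCoords w L (boxPoint w L t) + w L • fun i => (g i : ℤ) := by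
  rw [boxTranslate, map_add, cornerCoords_sum_smul]

theorem sum_cornerCoords_boxPoint (hwL : w L ≠ 0) (t : ℕ) :
    ∑ i, cornerCoords w L (boxPoint w L t) i =
      t + ∑ i, (w L * ⌈(t * w i / w L : ℚ)⌉ - t * w i) := by
  have hL : w L * ⌈(t * w L / w L : ℚ)⌉ - t * w L = 0 := by
    rw [mul_div_cancel_right₀ _ (by exact_mod_cast hwL)]
    simp [mul_comm]
  rw [Fintype.sum_eq_add_sum_compl L, Fintype.sum_eq_add_sum_compl L, hL, zero_add]
  congr 1
  · simp [cornerCoords_apply, boxPoint]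
  · refine Finset.sum_congr rfl fun i hi => ?_
    have hi : i ≠ L := by simpa using hi
    simp [cornerCoords_apply, boxPoint, hi]

variable {w L}

theorem cornerCoords_boxPoint_nonneg (hwL : 0 < w L) (t : ℕ) (i : Fin N) :
    0 ≤ cornerCoords w L (boxPoint w L t) i := by
  rw [cornerCoords_apply]
  split_ifs with hi
  · simp [boxPoint]
  · simpa [boxPoint, hi, sub_nonneg, mul_comm] using
      (Int.ceil_intCast_div_le_iff (a := t * w i) hwL).1 le_rfl

theorem cornerCoords_boxTranslate_nonneg (hwL : 0 < w L) (t : ℕ) (g : Fin N → ℕ) (i : Fin N) :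
    0 ≤ cornerCoords w L (boxTranslate w L t g) i := by
  rw [cornerCoords_boxTranslate, Pi.add_apply, Pi.smul_apply, smul_eq_mul]
  have := cornerCoords_boxPoint_nonneg hwL t i
  positivity

variable {q : ℕ}

theorem sum_cornerCoords_boxTranslate_le_iff (hq : 0 < q) (hwL : w L = q) (t : ℕ)
    (g : Fin N → ℕ) (n : ℕ) :
    ∑ i, cornerCoords w L (boxTranslate w L t g) i ≤ w L * n ↔
      ∑ i, g i + boxHeight w L t ≤ n := by
  have hs : 0 ≤ ∑ i, cornerCoords w L (boxPoint w L t) i :=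
    Finset.sum_nonneg fun i _ => cornerCoords_boxPoint_nonneg (by omega) t i
  have hq' : (0 : ℚ) < q := by exact_mod_cast hq
  simp only [cornerCoords_boxTranslate, Pi.add_apply, Pi.smul_apply, smul_eq_mul,
    Finset.sum_add_distrib, ← Finset.mul_sum]
  rw [boxHeight, add_comm (∑ i, g i), ← Nat.ceil_add_natCast (by rw [hwL]; positivity),
    Nat.ceil_le, hwL, Int.cast_natCast, div_add' _ _ _ hq'.ne', div_le_iff₀ hq',
    ← Int.cast_le (R := ℚ)]
  push_cast
  constructor <;> intro h <;> linarith

theorem boxTranslate_injective (hq : 0 < q) (hwL : w L = q) {t t' : ℕ} (ht : t < q)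
    (ht' : t' < q) {g g' : Fin N → ℕ} (h : boxTranslate w L t g = boxTranslate w L t' g') :
    t = t' ∧ g = g' := by
  have hL := congrFun h L
  simp only [boxTranslate_apply, if_true, hwL] at hL
  have htt' : t = t' := by
    have hL' : t + g L * q = t' + g' L * q := by exact_mod_cast hL
    rw [← Nat.mod_eq_of_lt ht, ← Nat.mod_eq_of_lt ht', ← Nat.add_mul_mod_self_right t (g L),
      hL', Nat.add_mul_mod_self_right]
  subst htt'
  have hcoords := congrArg (cornerCoords w L) h
  rw [cornerCoords_boxTranslate, cornerCoords_boxTranslate, add_right_inj, hwL] at hcoords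
  refine ⟨rfl, funext fun i => ?_⟩
  exact_mod_cast congrFun (smul_right_injective _ (by omega : (q : ℤ) ≠ 0) hcoords) i

theorem exists_boxTranslate_eq (hq : 0 < q) (hwL : w L = q) {x : Fin N → ℤ}
    (hx : ∀ i, 0 ≤ cornerCoords w L x i) : ∃ t < q, ∃ g, boxTranslate w L t g = x := by
  have hxL : 0 ≤ x L := by simpa [cornerCoords_apply] using hx L
  obtain ⟨a, ha⟩ : ∃ a : ℕ, (a : ℤ) = x L / q :=
    ⟨(x L / q).toNat, Int.toNat_of_nonneg (by positivity)⟩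
  obtain ⟨t, ht⟩ : ∃ t : ℕ, (t : ℤ) = x L % q :=
    ⟨(x L % q).toNat, Int.toNat_of_nonneg (Int.emod_nonneg _ (by omega))⟩
  have hxL_eq : x L = q * a + t := by rw [ha, ht, Int.mul_ediv_add_emod]
  have htq : t < q := by have := Int.emod_lt_of_pos (x L) (by omega : (0 : ℤ) < q); omega
  refine ⟨t, htq, fun i => if i = L then a else (x i - a * w i - ⌈(t * w i / w L : ℚ)⌉).toNat, ?_⟩
  funext i
  by_cases hi : i = L
  · subst hi
    simp only [boxTranslate_apply, ↓reduceIte, hwL, hxL_eq]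
    ring
  · have hxi : (t : ℤ) * w i ≤ w L * (x i - a * w i) := by
      have := hx i
      rw [cornerCoords_apply, if_neg hi, hxL_eq, hwL] at this
      rw [hwL]
      linear_combination this
    have hle : ⌈(t * w i / w L : ℚ)⌉ ≤ x i - a * w i := by
      exact_mod_cast (Int.ceil_intCast_div_le_iff (by omega : 0 < w L)).2 hxi
    simp only [boxTranslate_apply, if_neg hi, ↓reduceIte]
    omega

end BoxPoints

section CornerSimplexEhrhart

open Finset

variable {N : ℕ} (w : Fin N → ℤ) (L : Fin N)

theorem latticePoints_smul_convexHull_cornerVertices (hwL : 0 < w L) (n : ℕ) :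
    latticePoints ((n : ℝ) • convexHull ℝ
        (Set.range fun j i => ((cornerVertices w L j i : ℤ) : ℝ))) =
      {x | (∀ i, 0 ≤ cornerCoords w L x i) ∧ ∑ i, cornerCoords w L x i ≤ w L * n} := by
  ext x
  rw [latticePoints, Set.mem_ofPred_eq, intCast_cornerVertices,
    mem_smul_convexHull_cornerVertices _ L (by exact_mod_cast hwL) n.cast_nonneg]
  have hcast (i : Fin N) : cornerCoords (fun i => (w i : ℝ)) L (fun i => (x i : ℝ)) i =
      (cornerCoords w L x i : ℝ) := (cornerCoords_map w L (Int.castRingHom ℝ) x i).symm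
  simp only [Set.mem_ofPred_eq, hcast]
  exact_mod_cast Iff.rfl

theorem ehrhart_convexHull_cornerVertices {q : ℕ} (hq : 0 < q) (hwL : w L = q) (n : ℕ) :
    ehrhart (convexHull ℝ (Set.range fun j i => ((cornerVertices w L j i : ℤ) : ℝ))) n =
      ∑ t : Fin q, if boxHeight w L t ≤ n then ((n - boxHeight w L t + N).choose N : ℤ) else 0 := by
  let f : (Σ t : Fin q, {g : Fin N → ℕ // ∑ i, g i + boxHeight w L t ≤ n}) →
      {x : Fin N → ℤ | (∀ i, 0 ≤ cornerCoords w L x i) ∧ ∑ i, cornerCoords w L x i ≤ w L * n} :=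
    fun p => ⟨boxTranslate w L p.1 p.2, cornerCoords_boxTranslate_nonneg (by omega) _ _,
      (sum_cornerCoords_boxTranslate_le_iff hq hwL _ _ _).2 p.2.2⟩
  have hf : Function.Bijective f := by
    constructor
    · rintro ⟨t, g⟩ ⟨t', g'⟩ h
      obtain ⟨htt', hgg'⟩ := boxTranslate_injective hq hwL t.2 t'.2 (congrArg Subtype.val h)
      obtain rfl : t = t' := Fin.ext htt'
      obtain rfl : g = g' := Subtype.ext hgg'
      rfl
    · rintro ⟨x, hx₀, hx₁⟩
      obtain ⟨t, ht, g, rfl⟩ := exists_boxTranslate_eq hq hwL hx₀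
      exact ⟨⟨⟨t, ht⟩, g, (sum_cornerCoords_boxTranslate_le_iff hq hwL _ _ _).1 hx₁⟩, rfl⟩
  rw [ehrhart, latticePoints_smul_convexHull_cornerVertices w L (by omega),
    ← Nat.card_coe_set_eq, ← Nat.card_eq_of_bijective f hf, Nat.card_sigma]
  simp only [card_tuple_sum_add_le]
  push_cast
  rfl

theorem deltaVec_convexHull_cornerVertices {q : ℕ} (hq : 0 < q) (hwL : w L = q) (i : ℕ) :
    deltaVec (convexHull ℝ (Set.range fun j i => ((cornerVertices w L j i : ℤ) : ℝ))) N i =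
      #{t : Fin q | boxHeight w L t = i} :=
  deltaVec_eq_card_of_ehrhart_eq _ (ehrhart_convexHull_cornerVertices w L hq hwL) i

end CornerSimplexEhrhart

section GapWeight

open Finset

def gapWeight (k l : ℕ) : Fin (5 * k + 4 + 3 * l) → ℤ :=
  fun i => if (i : ℕ) = 0 then 5 else if (i : ℕ) < l then 2 else 4

def gapApex (k l : ℕ) : Fin (5 * k + 4 + 3 * l) := ⟨0, by omega⟩

variable (k l : ℕ)

theorem sum_gapWeight (hl : 1 ≤ l) {M : Type*} [AddCommMonoid M] (f : ℤ → M) :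
    ∑ i, f (gapWeight k l i) = f 5 + (l - 1) • f 2 + (5 * k + 2 * l + 4) • f 4 := by
  unfold gapWeight
  rw [Fin.sum_univ_eq_sum_range (fun m => f (if m = 0 then 5 else if m < l then 2 else 4)),
    show 5 * k + 4 + 3 * l = 1 + (l - 1) + (5 * k + 2 * l + 4) by omega,
    Finset.sum_range_add, Finset.sum_range_add, Finset.sum_range_one, if_pos rfl,
    Finset.sum_congr rfl fun m hm =>
      show f (if 1 + m = 0 then 5 else if 1 + m < l then 2 else 4) = f 2 by
        rw [Finset.mem_range] at hm; rw [if_neg (by omega), if_pos (by omega)],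
    Finset.sum_congr rfl fun m _ =>
      show f (if 1 + (l - 1) + m = 0 then 5 else if 1 + (l - 1) + m < l then 2 else 4) = f 4 by
        rw [if_neg (by omega), if_neg (by omega)]]
  simp

theorem boxHeight_gapWeight (hl : 1 ≤ l) (t : Fin 5) :
    boxHeight (gapWeight k l) (gapApex k l) t =
      ![0, k + l + 1, 2 * k + l + 2, 3 * k + 2 * l + 3, 4 * k + 2 * l + 4] t := by
  have hwL : gapWeight k l (gapApex k l) = 5 := rfl
  rw [boxHeight, sum_cornerCoords_boxPoint _ _ (by rw [hwL]; norm_num), hwL,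
    sum_gapWeight k l hl fun a : ℤ => 5 * ⌈((t : ℕ) * a / (5 : ℤ) : ℚ)⌉ - (t : ℕ) * a]
  refine Nat.ceil_intCast_div_eq (by norm_num) ?_ ?_ <;>
    fin_cases t <;> norm_num [Int.ceil_eq_iff] <;> omega

theorem card_boxHeight_gapWeight_eq (hl : 1 ≤ l) (i : ℕ) :
    #{t : Fin 5 | boxHeight (gapWeight k l) (gapApex k l) t = i} =
      if i = 0 ∨ i = k + l + 1 ∨ i = 2 * k + l + 2 ∨ i = 3 * k + 2 * l + 3 ∨
        i = 4 * k + 2 * l + 4 then 1 else 0 := by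
  simp only [boxHeight_gapWeight k l hl, card_filter, Fin.sum_univ_five, Fin.isValue,
    Matrix.cons_val_zero, Matrix.cons_val_one, Matrix.cons_val]
  grind

end GapWeight

theorem stmt18 (k l : ℕ) (hl : 1 ≤ l) (d' : ℕ) (hd' : d' = 5 * k + 4 + 3 * l) :
    ∃ v : Fin (d' + 1) → Fin d' → ℤ,
      AffineIndependent ℝ (fun j => fun i => ((v j i : ℤ) : ℝ)) ∧
      ∀ i ≤ d',
        deltaVec (convexHull ℝ (Set.range fun j => fun i => ((v j i : ℤ) : ℝ))) d' i =
          if i = 0 ∨ i = k + l + 1 ∨ i = 2 * k + l + 2 ∨ i = 3 * k + 2 * l + 3 ∨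
              i = 4 * k + 2 * l + 4 then 1 else 0 := by
  subst hd'
  have hwL : gapWeight k l (gapApex k l) = (5 : ℕ) := rfl
  refine ⟨cornerVertices (gapWeight k l) (gapApex k l), ?_, fun i _ => ?_⟩
  · rw [intCast_cornerVertices]
    exact affineIndependent_cornerVertices _ _ (by simp [hwL])
  · rw [deltaVec_convexHull_cornerVertices _ _ (by norm_num) hwL,
      card_boxHeight_gapWeight_eq k l hl]
    push_cast
    rfl
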